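/- arXiv:1912.05485 — 4 statements merged into one kernel-verified Lean document; each statement's English description precedes it below -/
import Mathlib

section
/- Let a ∈ B^n and x ∈ S^{n-1}. Then the point φ_a(-φ_a(x)) lies on S^{n-1}, lies on the straight line through x and a (it is the second intersection point of that line with S^{n-1}), and is given explicitly by φ_a(-φ_a(x)) = x + 2((1 - ⟨x,a⟩)/‖a - x‖²)(a - x). -/
open Metric

noncomputable section

/-- The involutive automorphism `φ_a` of the closed unit ball:
`φ_a(x) = (a - P_a x - √(1-‖a‖²)·Q_a x)/(1 - ⟨x,a⟩)`, where `P_a` is the orthogonal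
projection onto the span of `a` and `Q_a = id - P_a` (for `a = 0` the formula gives
`φ_0(x) = -x`, since division by `‖0‖² = 0` yields `P_0 x = 0`). -/
def phiAut {n : ℕ} (a x : EuclideanSpace ℝ (Fin n)) : EuclideanSpace ℝ (Fin n) :=
  (1 - (inner ℝ x a : ℝ))⁻¹ •
    (a - ((inner ℝ a x : ℝ) / ‖a‖ ^ 2) • a
      - Real.sqrt (1 - ‖a‖ ^ 2) • (x - ((inner ℝ a x : ℝ) / ‖a‖ ^ 2) • a))

/-!
Written out, `φ_a x` is a combination of `a` and `x` with `⟪φ_a x, a⟫ = (‖a‖² - ⟪x, a⟫)/(1 - ⟪x, a⟫)`,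
so `φ_a (-φ_a x)` is a combination of `a` and `x` whose coefficients follow from an algebraic
identity once `‖x‖ = 1`. The point obtained is the reflection of `x` in the hyperplane orthogonal
to `a - x`, hence lies on the unit sphere.
-/

open InnerProductSpace Submodule

theorem add_smul_sub_eq_reflection {E : Type*} [NormedAddCommGroup E] [InnerProductSpace ℝ E]
    (a x : E) (hx : ‖x‖ = 1) :
    x + (2 * (1 - ⟪x, a⟫_ℝ) / ‖a - x‖ ^ 2) • (a - x) = reflection (ℝ ∙ (a - x))ᗮ x := by
  rw [reflection_orthogonal_apply, reflection_singleton_apply, inner_sub_left,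
    real_inner_self_eq_norm_sq, hx, real_inner_comm, RCLike.ofReal_real_eq_id, id]
  match_scalars <;> ring

theorem norm_add_smul_sub_eq_one {E : Type*} [NormedAddCommGroup E] [InnerProductSpace ℝ E]
    (a x : E) (hx : ‖x‖ = 1) :
    ‖x + (2 * (1 - ⟪x, a⟫_ℝ) / ‖a - x‖ ^ 2) • (a - x)‖ = 1 := by
  rw [add_smul_sub_eq_reflection a x hx, LinearIsometryEquiv.norm_map, hx]

theorem sq_sqrt_one_sub_norm_sq {E : Type*} [SeminormedAddCommGroup E] {a : E} (ha : ‖a‖ ≤ 1) :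
    √(1 - ‖a‖ ^ 2) ^ 2 = 1 - ‖a‖ ^ 2 :=
  Real.sq_sqrt (sub_nonneg.2 (pow_le_one₀ (norm_nonneg a) ha))

section EuclideanSpace

variable {n : ℕ}

/-- Since `‖a‖² = (1 - s)(1 + s)` for `s = √(1 - ‖a‖²)`, the two projection terms combine into a
coefficient of `a` without the division by `‖a‖²`. -/
theorem phiAut_eq {a : EuclideanSpace ℝ (Fin n)} (ha : ‖a‖ ≤ 1) (x : EuclideanSpace ℝ (Fin n)) :
    phiAut a x = (1 - ⟪x, a⟫_ℝ)⁻¹ •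
      ((1 - ⟪x, a⟫_ℝ / (1 + √(1 - ‖a‖ ^ 2))) • a - √(1 - ‖a‖ ^ 2) • x) := by
  rcases eq_or_ne a 0 with rfl | ha0
  · simp [phiAut]
  have hs := sq_sqrt_one_sub_norm_sq ha
  rw [phiAut, real_inner_comm x a]
  generalize √(1 - ‖a‖ ^ 2) = s at hs ⊢
  have hs0 : (1 - s) * (1 + s) ≠ 0 := by
    rw [show (1 - s) * (1 + s) = ‖a‖ ^ 2 by linear_combination -hs]; simpa using ha0
  have : 1 + s ≠ 0 := right_ne_zero_of_mul hs0
  match_scalars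
  · field_simp
    congr 1
    linear_combination ⟪x, a⟫_ℝ * hs
  · ring

theorem inner_phiAut_left {a : EuclideanSpace ℝ (Fin n)} (ha : ‖a‖ ≤ 1)
    (x : EuclideanSpace ℝ (Fin n)) :
    ⟪phiAut a x, a⟫_ℝ = (‖a‖ ^ 2 - ⟪x, a⟫_ℝ) / (1 - ⟪x, a⟫_ℝ) := by
  have hs := sq_sqrt_one_sub_norm_sq ha
  have hs1 : 0 < 1 + √(1 - ‖a‖ ^ 2) := by positivity
  rw [phiAut_eq ha, real_inner_smul_left, inner_sub_left, real_inner_smul_left,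
    real_inner_smul_left, real_inner_self_eq_norm_sq]
  generalize √(1 - ‖a‖ ^ 2) = s at hs hs1 ⊢
  rw [div_eq_inv_mul (‖a‖ ^ 2 - _)]
  congr 1
  field_simp
  linear_combination -⟪x, a⟫_ℝ * hs

theorem phiAut_neg_phiAut {a x : EuclideanSpace ℝ (Fin n)} (ha : ‖a‖ < 1) (hx : ‖x‖ = 1) :
    phiAut a (-phiAut a x) = x + (2 * (1 - ⟪x, a⟫_ℝ) / ‖a - x‖ ^ 2) • (a - x) := by
  have hc : 0 < 1 - ⟪x, a⟫_ℝ :=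
    sub_pos.2 <| (real_inner_le_norm x a).trans_lt (by rwa [hx, one_mul])
  have hax : a - x ≠ 0 := sub_ne_zero.2 fun h => by rw [h, hx] at ha; exact ha.false
  have hD0 : 0 < ‖a - x‖ ^ 2 := by positivity
  have hD : ‖a - x‖ ^ 2 = 1 + ‖a‖ ^ 2 - 2 * ⟪x, a⟫_ℝ := by
    rw [norm_sub_sq_real, hx, real_inner_comm x a]; ring
  have hinner : ⟪-phiAut a x, a⟫_ℝ = 1 - ‖a - x‖ ^ 2 / (1 - ⟪x, a⟫_ℝ) := by
    rw [inner_neg_left, inner_phiAut_left ha.le, hD]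
    field_simp
    ring
  have hs := sq_sqrt_one_sub_norm_sq ha.le
  have hs1 : 0 < 1 + √(1 - ‖a‖ ^ 2) := by positivity
  rw [phiAut_eq ha.le (-phiAut a x), hinner, sub_sub_cancel, inv_div, phiAut_eq ha.le x]
  generalize √(1 - ‖a‖ ^ 2) = s at hs hs1 ⊢
  generalize ‖a - x‖ ^ 2 = D at hD hD0 ⊢
  match_scalars
  · field_simp
    linear_combination hD + hs
  · field_simp
    linear_combination -hD - hs

end EuclideanSpace

theorem phi_neg_phi_eq_tau_general
    {n : ℕ} (a x : EuclideanSpace ℝ (Fin n))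
    (ha : a ∈ ball (0 : EuclideanSpace ℝ (Fin n)) 1)
    (hx : x ∈ sphere (0 : EuclideanSpace ℝ (Fin n)) 1) :
    ‖phiAut a (-(phiAut a x))‖ = 1 ∧
    (∃ t : ℝ, phiAut a (-(phiAut a x)) = x + t • (a - x)) ∧
    phiAut a (-(phiAut a x))
      = x + (2 * (1 - (inner ℝ x a : ℝ)) / ‖a - x‖ ^ 2) • (a - x) := by
  rw [mem_ball_zero_iff] at ha
  rw [mem_sphere_zero_iff_norm] at hx
  rw [phiAut_neg_phiAut ha hx]
  exact ⟨norm_add_smul_sub_eq_one a x hx, ⟨_, rfl⟩, rfl⟩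

theorem phi_neg_phi_eq_tau
    {n : ℕ} (hn : 2 ≤ n) (a x : EuclideanSpace ℝ (Fin n))
    (ha : a ∈ ball (0 : EuclideanSpace ℝ (Fin n)) 1)
    (hx : x ∈ sphere (0 : EuclideanSpace ℝ (Fin n)) 1) :
    ‖phiAut a (-(phiAut a x))‖ = 1 ∧
    (∃ t : ℝ, phiAut a (-(phiAut a x)) = x + t • (a - x)) ∧
    phiAut a (-(phiAut a x))
      = x + (2 * (1 - (inner ℝ x a : ℝ)) / ‖a - x‖ ^ 2) • (a - x) :=
  phi_neg_phi_eq_tau_general a x ha hx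
end
end

section
/- Let a ∈ B^n, let k ≥ 1 be an integer, and set J_a(y) = (√(1-‖a‖²)/(1 - ⟨y,a⟩))^{k-1}. Then for every x ∈ S^{n-1}, J_a(-φ_a(x)) / J_a(φ_a(x)) = ((1-‖a‖²)/‖x - a‖²)^{k-1}. -/
open Metric

noncomputable section

/-- The Jacobian factor `J_a(y) = (√(1-‖a‖²)/(1 - ⟨y,a⟩))^{k-1}`. -/
def Jfun {n : ℕ} (k : ℕ) (a y : EuclideanSpace ℝ (Fin n)) : ℝ :=
  (Real.sqrt (1 - ‖a‖ ^ 2) / (1 - (inner ℝ y a : ℝ))) ^ (k - 1)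

/- Proof idea: the ratio only depends on `u = ⟨φ_a(x), a⟩`, being `((1 - u)/(1 + u))^{k-1}`.
Pairing `φ_a(x)` with `a` kills the `Q_a x` term, so `u = (‖a‖² - t)/(1 - t)` with `t = ⟨x, a⟩`,
and then `1 - u` and `1 + u` are `1 - ‖a‖²` and `1 - 2t + ‖a‖² = ‖x - a‖²` over the common
denominator `1 - t`. -/

section

variable {n : ℕ}

theorem inner_phiAut_self (a x : EuclideanSpace ℝ (Fin n)) :
    inner ℝ (phiAut a x) a = (‖a‖ ^ 2 - inner ℝ x a) / (1 - inner ℝ x a) := by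
  rcases eq_or_ne a 0 with rfl | ha
  · simp
  have hna : ‖a‖ ≠ 0 := norm_ne_zero_iff.mpr ha
  simp only [phiAut, real_inner_smul_left, inner_sub_left, real_inner_self_eq_norm_sq,
    real_inner_comm x a]
  field_simp
  ring

theorem Jfun_neg_div_Jfun (k : ℕ) {a : EuclideanSpace ℝ (Fin n)} (ha : ‖a‖ < 1)
    (y : EuclideanSpace ℝ (Fin n)) :
    Jfun k a (-y) / Jfun k a y
      = ((1 - inner ℝ y a) / (1 + inner ℝ y a)) ^ (k - 1) := by
  have hs : Real.sqrt (1 - ‖a‖ ^ 2) ≠ 0 := by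
    rw [Real.sqrt_ne_zero']
    nlinarith [norm_nonneg a]
  rw [Jfun, Jfun, ← div_pow, inner_neg_left, sub_neg_eq_add, div_div_div_cancel_left' _ _ hs]

end

theorem jacobian_ratio_general
    {n k : ℕ} (a : EuclideanSpace ℝ (Fin n))
    (ha : a ∈ ball (0 : EuclideanSpace ℝ (Fin n)) 1) :
    ∀ x ∈ sphere (0 : EuclideanSpace ℝ (Fin n)) 1,
      Jfun k a (-(phiAut a x)) / Jfun k a (phiAut a x)
        = ((1 - ‖a‖ ^ 2) / ‖x - a‖ ^ 2) ^ (k - 1) := by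
  intro x hx
  rw [mem_ball_zero_iff] at ha
  rw [mem_sphere_zero_iff_norm] at hx
  have hxa : inner ℝ x a < (1 : ℝ) :=
    (real_inner_le_norm x a).trans_lt (by rwa [hx, one_mul])
  have hdist : ‖x - a‖ ^ 2 = 1 - 2 * inner ℝ x a + ‖a‖ ^ 2 := by
    rw [norm_sub_sq_real, hx]; ring
  rw [Jfun_neg_div_Jfun k ha, inner_phiAut_self, hdist]
  congr 1
  field_simp [sub_ne_zero.mpr hxa.ne']
  ring

theorem jacobian_ratio
    {n k : ℕ} (hn : 2 ≤ n) (hk : 1 ≤ k) (a : EuclideanSpace ℝ (Fin n))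
    (ha : a ∈ ball (0 : EuclideanSpace ℝ (Fin n)) 1) :
    ∀ x ∈ sphere (0 : EuclideanSpace ℝ (Fin n)) 1,
      Jfun k a (-(phiAut a x)) / Jfun k a (phiAut a x)
        = ((1 - ‖a‖ ^ 2) / ‖x - a‖ ^ 2) ^ (k - 1) :=
  jacobian_ratio_general a ha
end
end

section
/- Let E₀ ⊂ ℝⁿ be a k-dimensional linear subspace (1 ≤ k < n), let a ∈ B^n, and let a′ be the orthogonal projection of a onto E₀. Then for every x ∈ E₀ with ‖x‖ = 1, ‖φ_a(x) - φ_a(a′)‖² = (1-‖a‖²)/(1-‖a′‖²). In particular, φ_a(E₀ ∩ S^{n-1}) is contained in the sphere of center c = φ_a(a′) and radius r = √((1-‖a‖²)/(1-‖a′‖²)). -/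
open Metric Module

noncomputable section

/-! For `‖a‖ ≤ 1` the map `φ_a` satisfies
`1 - ⟪φ_a x, φ_a y⟫ = (1 - ‖a‖²)(1 - ⟪x, y⟫) / ((1 - ⟪x, a⟫)(1 - ⟪y, a⟫))`.
Since `a - a'` is orthogonal to `E₀`, every `y ∈ E₀` has `⟪y, a⟫ = ⟪y, a'⟫`, in particular
`⟪a', a⟫ = ‖a'‖²`; so for a unit vector `x ∈ E₀` the identity gives
`1 - ⟪φ_a x, φ_a a'⟫ = 1 - ‖φ_a a'‖² = (1 - ‖a‖²) / (1 - ‖a'‖²)` and `‖φ_a x‖ = 1`.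
Expanding `‖φ_a x - φ_a a'‖²` in these three quantities gives the radius. -/

open RealInnerProductSpace

lemma real_inner_lt_one {F : Type*} [NormedAddCommGroup F] [InnerProductSpace ℝ F] {x a : F}
    (hx : ‖x‖ ≤ 1) (ha : ‖a‖ < 1) : ⟪x, a⟫ < 1 :=
  calc ⟪x, a⟫ ≤ ‖x‖ * ‖a‖ := real_inner_le_norm x a
    _ ≤ 1 * ‖a‖ := by gcongr
    _ < 1 := by linarith

section

variable {n : ℕ} {a x y : EuclideanSpace ℝ (Fin n)}

theorem one_sub_inner_phiAut (ha : ‖a‖ ≤ 1) (hx : ⟪x, a⟫ ≠ 1) (hy : ⟪y, a⟫ ≠ 1) :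
    1 - ⟪phiAut a x, phiAut a y⟫
      = (1 - ‖a‖ ^ 2) * (1 - ⟪x, y⟫) / ((1 - ⟪x, a⟫) * (1 - ⟪y, a⟫)) := by
  have hdx : 1 - ⟪x, a⟫ ≠ 0 := sub_ne_zero.mpr hx.symm
  have hdy : 1 - ⟪y, a⟫ ≠ 0 := sub_ne_zero.mpr hy.symm
  rcases eq_or_ne a 0 with rfl | ha0
  · simp [phiAut]
  have hs : Real.sqrt (1 - ‖a‖ ^ 2) ^ 2 = 1 - ‖a‖ ^ 2 :=
    Real.sq_sqrt (by nlinarith [norm_nonneg a])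
  have hA : ‖a‖ ^ 2 ≠ 0 := by positivity
  simp only [phiAut, real_inner_smul_left, real_inner_smul_right, inner_sub_left,
    inner_sub_right, real_inner_self_eq_norm_sq]
  rw [real_inner_comm x a, real_inner_comm y a]
  field_simp
  linear_combination (⟪x, a⟫ * ⟪y, a⟫ - ‖a‖ ^ 2 * ⟪x, y⟫) * hs

theorem norm_phiAut_of_norm_eq_one (ha : ‖a‖ < 1) (hx : ‖x‖ = 1) : ‖phiAut a x‖ = 1 := by
  have hxa := (real_inner_lt_one hx.le ha).ne
  have h := one_sub_inner_phiAut ha.le hxa hxa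
  rw [real_inner_self_eq_norm_sq, real_inner_self_eq_norm_sq, hx] at h
  have h_sq : ‖phiAut a x‖ ^ 2 = 1 := by norm_num at h; linarith
  exact (pow_eq_one_iff_of_nonneg (norm_nonneg _) two_ne_zero).mp h_sq

theorem one_sub_inner_phiAut_starProjection (K : Submodule ℝ (EuclideanSpace ℝ (Fin n)))
    [K.HasOrthogonalProjection] (ha : ‖a‖ < 1) (hy : y ∈ K) (hy1 : ‖y‖ ≤ 1) :
    1 - ⟪phiAut a y, phiAut a (K.starProjection a)⟫
      = (1 - ‖a‖ ^ 2) / (1 - ‖K.starProjection a‖ ^ 2) := by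
  set b := K.starProjection a
  have hb1 : ‖b‖ < 1 := (K.norm_starProjection_apply_le a).trans_lt ha
  have hyb : ⟪y, b⟫ = ⟪y, a⟫ := K.inner_orthogonalProjectionOnto_eq_of_mem_left ⟨y, hy⟩ a
  have hba : ⟪b, a⟫ = ‖b‖ ^ 2 := by
    rw [← real_inner_self_eq_norm_sq]
    exact (K.inner_orthogonalProjectionOnto_eq_of_mem_left (K.orthogonalProjectionOnto a) a).symm
  have hya := real_inner_lt_one hy1 ha
  rw [one_sub_inner_phiAut ha.le hya.ne (real_inner_lt_one hb1.le ha).ne, hyb, hba]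
  have : 1 - ⟪y, a⟫ ≠ 0 := by linarith
  have : 1 - ‖b‖ ^ 2 ≠ 0 := by nlinarith [norm_nonneg b]
  field_simp

theorem norm_phiAut_sub_phiAut_starProjection_sq (K : Submodule ℝ (EuclideanSpace ℝ (Fin n)))
    [K.HasOrthogonalProjection] (ha : ‖a‖ < 1) (hx : x ∈ K) (hx1 : ‖x‖ = 1) :
    ‖phiAut a x - phiAut a (K.starProjection a)‖ ^ 2
      = (1 - ‖a‖ ^ 2) / (1 - ‖K.starProjection a‖ ^ 2) := by
  have hb1 : ‖K.starProjection a‖ ≤ 1 := (K.norm_starProjection_apply_le a).trans ha.le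
  have h_cross := one_sub_inner_phiAut_starProjection K ha hx hx1.le
  have h_center := one_sub_inner_phiAut_starProjection K ha (K.starProjection_apply_mem a) hb1
  rw [real_inner_self_eq_norm_sq] at h_center
  rw [norm_sub_sq_real, norm_phiAut_of_norm_eq_one ha hx1]
  linarith

end

theorem image_of_linear_section_center_radius_general
    {n : ℕ} (E₀ : Submodule ℝ (EuclideanSpace ℝ (Fin n)))
    (a : EuclideanSpace ℝ (Fin n)) (ha : a ∈ ball (0 : EuclideanSpace ℝ (Fin n)) 1) :
    (∀ x ∈ (E₀ : Set (EuclideanSpace ℝ (Fin n))), ‖x‖ = 1 →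
        ‖phiAut a x - phiAut a ((E₀.orthogonalProjectionOnto a : EuclideanSpace ℝ (Fin n)))‖ ^ 2
          = (1 - ‖a‖ ^ 2) / (1 - ‖(E₀.orthogonalProjectionOnto a : EuclideanSpace ℝ (Fin n))‖ ^ 2)) ∧
      phiAut a '' ((E₀ : Set (EuclideanSpace ℝ (Fin n))) ∩ sphere 0 1) ⊆
        sphere (phiAut a ((E₀.orthogonalProjectionOnto a : EuclideanSpace ℝ (Fin n))))
          (Real.sqrt ((1 - ‖a‖ ^ 2) /
            (1 - ‖(E₀.orthogonalProjectionOnto a : EuclideanSpace ℝ (Fin n))‖ ^ 2))) := by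
  have ha1 : ‖a‖ < 1 := by simpa using ha
  have h_dist_sq := fun x (hx : x ∈ E₀) ↦ norm_phiAut_sub_phiAut_starProjection_sq E₀ ha1 hx
  refine ⟨h_dist_sq, ?_⟩
  rintro _ ⟨x, ⟨hxE, hxS⟩, rfl⟩
  rw [mem_sphere_iff_norm, Submodule.coe_orthogonalProjectionOnto_apply,
    ← h_dist_sq x hxE (by simpa using hxS), Real.sqrt_sq (norm_nonneg _)]

theorem image_of_linear_section_center_radius
    {n k : ℕ} (hn : 2 ≤ n) (hk1 : 1 ≤ k) (hkn : k < n)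
    (E₀ : Submodule ℝ (EuclideanSpace ℝ (Fin n))) (hE₀ : finrank ℝ E₀ = k)
    (a : EuclideanSpace ℝ (Fin n)) (ha : a ∈ ball (0 : EuclideanSpace ℝ (Fin n)) 1) :
    (∀ x ∈ (E₀ : Set (EuclideanSpace ℝ (Fin n))), ‖x‖ = 1 →
        ‖phiAut a x - phiAut a ((E₀.orthogonalProjectionOnto a : EuclideanSpace ℝ (Fin n)))‖ ^ 2
          = (1 - ‖a‖ ^ 2) / (1 - ‖(E₀.orthogonalProjectionOnto a : EuclideanSpace ℝ (Fin n))‖ ^ 2)) ∧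
      phiAut a '' ((E₀ : Set (EuclideanSpace ℝ (Fin n))) ∩ sphere 0 1) ⊆
        sphere (phiAut a ((E₀.orthogonalProjectionOnto a : EuclideanSpace ℝ (Fin n))))
          (Real.sqrt ((1 - ‖a‖ ^ 2) /
            (1 - ‖(E₀.orthogonalProjectionOnto a : EuclideanSpace ℝ (Fin n))‖ ^ 2))) :=
  image_of_linear_section_center_radius_general E₀ a ha
end
end

section
/- Fix an integer k ≥ 1. Let z_a, z_b ∈ ℂ with |z_a| ≠ 1, |z_b| ≠ 1 and z_a ≠ z_b, and suppose the Möbius transformation T is hyperbolic, parabolic, or loxodromic, i.e. either D > 0 and (⟨z_a,z_b⟩ - 1)² ≥ D, or D < 0 and ⟨z_a,z_b⟩ ≠ 1. Then every T-automorphic continuous function f : S¹ → ℝ is constant when k = 1, and is identically zero when k > 1. -/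
/-!
Write `α = conj z_a * z_b - 1` and `β = z_a - z_b`, so that `T z = (α z + β) / (conj β z + conj α)`
and `D = |α|² - |β|²`. If `D > 0` and `(Re α)² ≥ D`, then for `s² = |β|² - (Im α)²` the points
`p_{±s} = (±s + i Im α) / conj β` lie on the circle and
`T z - p_s = (Re α - s) (z - p_s) / (conj β z + conj α)`, so they are fixed by `T`. Choosing the
sign of `s` with `s Re α ≥ 0`, every orbit starting off `q = p_{-s}` converges to `p = p_s`:
geometrically when `s ≠ 0`, since `(z - p) / (z - q)` is multiplied by
`κ = (Re α - s) / (Re α + s) ∈ (0, 1)` at each step, and like `1 / n` when `s = 0`, since then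
`(z - p)⁻¹` is translated by `conj β / Re α` at each step. Along such an orbit the product of the
factors `|T′|` equals `κⁿ |Tⁿ z - q|² / |z - q|²`, which tends to `0`. Iterating the automorphy
relation gives `f z = (∏ |T′|)^(k-1) f (Tⁿ z) → 0^(k-1) f p`, and continuity extends this to
`z = q`. If `D < 0` and `Re α ≠ 0`, then `T ∘ T` has the same shape with `D²` in place of `D` and
falls under the first case, and `f` is also `T ∘ T`-automorphic.
-/

open Metric

noncomputable section

/-- The Möbius transformation `T` associated with `z_a, z_b`. -/
def mob (za zb z : ℂ) : ℂ :=
  ((starRingEnd ℂ za * zb - 1) * z + (za - zb)) /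
    ((starRingEnd ℂ za - starRingEnd ℂ zb) * z + (za * starRingEnd ℂ zb - 1))

/-- `|T′(z)|`, the modulus of the complex derivative of `mob za zb`. -/
def mobDeriv (za zb z : ℂ) : ℝ :=
  |(1 - ‖za‖ ^ 2) * (1 - ‖zb‖ ^ 2)| /
    ‖(starRingEnd ℂ za - starRingEnd ℂ zb) * z
      + (za * starRingEnd ℂ zb - 1)‖ ^ 2

/-- A continuous function `f` on the unit circle is `T`-automorphic (with weight
exponent `k-1`) if `f(z) = |T′(z)|^{k-1}·f(T z)` on the circle. -/
def TAutomorphic (k : ℕ) (za zb : ℂ) (f : ℂ → ℝ) : Prop :=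
  ∀ z ∈ sphere (0 : ℂ) 1, f z = (mobDeriv za zb z) ^ (k - 1) * f (mob za zb z)

open Filter Topology Finset

theorem exists_sq_eq_and_mul_nonneg {a : ℝ} (b : ℝ) (ha : 0 ≤ a) :
    ∃ s, s ^ 2 = a ∧ 0 ≤ s * b := by
  rcases le_total 0 b with hb | hb
  · exact ⟨√a, Real.sq_sqrt ha, mul_nonneg (Real.sqrt_nonneg a) hb⟩
  · exact ⟨-√a, by rw [neg_sq, Real.sq_sqrt ha], by nlinarith [Real.sqrt_nonneg a]⟩

theorem mem_unit_sphere_iff_normSq {z : ℂ} :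
    z ∈ sphere (0 : ℂ) 1 ↔ Complex.normSq z = 1 := by
  rw [mem_sphere_zero_iff_norm, ← Complex.sq_norm,
    pow_eq_one_iff_of_nonneg (norm_nonneg z) two_ne_zero]

theorem preperfect_unit_sphere : Preperfect (sphere (0 : ℂ) 1) :=
  (isPreconnected_sphere (by rw [Complex.rank_real_complex]; norm_num) 0 1
    ).preperfect_of_nontrivial ⟨1, by simp, -1, by simp, by norm_num⟩

section Dynamics

variable {X : Type*} {S : Set X} {φ : X → X}

@[to_additive]
theorem Set.MapsTo.prod_range_iterate_mul_eq {M : Type*} [CommMonoid M] (hφ : Set.MapsTo φ S S)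
    {a c d : X → M} (h : ∀ x ∈ S, c x * a x = d x * a (φ x)) {x : X} (hx : x ∈ S)
    (n : ℕ) :
    (∏ j ∈ Finset.range n, c (φ^[j] x)) * a x =
      (∏ j ∈ Finset.range n, d (φ^[j] x)) * a (φ^[n] x) := by
  induction n with
  | zero => simp
  | succ n ih =>
    rw [prod_range_succ, prod_range_succ, mul_right_comm, ih, mul_assoc, mul_comm (a _),
      h _ (hφ.iterate n hx), Function.iterate_succ_apply', mul_assoc]

theorem eq_zero_pow_mul_of_tendsto_iterate [TopologicalSpace X] (hS : Preperfect S)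
    (hφ : Set.MapsTo φ S S) {w f : X → ℝ} {m : ℕ} (hf : ContinuousOn f S)
    (haut : ∀ x ∈ S, f x = w x ^ m * f (φ x)) {p q : X} (hp : p ∈ S)
    (hconv : ∀ x ∈ S \ {q}, Tendsto (fun n ↦ φ^[n] x) atTop (𝓝 p) ∧
      Tendsto (fun n ↦ ∏ j ∈ range n, w (φ^[j] x)) atTop (𝓝 0)) :
    ∀ x ∈ S, f x = 0 ^ m * f p := by
  have off_q : Set.EqOn f (fun _ ↦ 0 ^ m * f p) (S \ {q}) := by
    intro x hx
    obtain ⟨horbit, hprod⟩ := hconv x hx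
    have hiter (n : ℕ) : f x = (∏ j ∈ range n, w (φ^[j] x)) ^ m * f (φ^[n] x) := by
      simpa [prod_pow] using
        hφ.prod_range_iterate_mul_eq (c := 1) (d := (w · ^ m)) (by simpa using haut) hx.1 n
    have horbit' : Tendsto (fun n ↦ φ^[n] x) atTop (𝓝[S] p) :=
      tendsto_nhdsWithin_iff.2 ⟨horbit, Eventually.of_forall fun n ↦ hφ.iterate n hx.1⟩
    exact tendsto_nhds_unique (tendsto_const_nhds.congr hiter)
      ((hprod.pow m).mul ((hf p hp).tendsto.comp horbit'))
  have hdense : S ⊆ closure (S \ {q}) := by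
    intro x hx
    rcases eq_or_ne x q with rfl | hxq
    · exact mem_closure_iff_clusterPt.2 (accPt_principal_iff_clusterPt.1 (hS x hx))
    · exact subset_closure ⟨hx, hxq⟩
  exact off_q.of_subset_closure hf continuousOn_const Set.sdiff_subset hdense

end Dynamics

namespace CircleMobius

open Complex ComplexConjugate

variable (α β : ℂ)

def den (z : ℂ) : ℂ := conj β * z + conj α

def map (z : ℂ) : ℂ := (α * z + β) / den α β z

-- `|(map α β)′ z|`, as `(map α β)′ z = (normSq α - normSq β) / den α β z ^ 2`.
def weight (z : ℂ) : ℝ := |normSq α - normSq β| / normSq (den α β z)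

def fixedPt (s : ℝ) : ℂ := (s + α.im * I) / conj β

theorem normSq_num_sub_normSq_den (z : ℂ) :
    normSq (α * z + β) - normSq (den α β z) = (normSq α - normSq β) * (normSq z - 1) := by
  simp only [den, normSq_apply, add_re, add_im, mul_re, mul_im, conj_re, conj_im]
  ring

variable {α β}

theorem den_ne_zero (hD : normSq α ≠ normSq β) {z : ℂ} (hz : z ∈ sphere (0 : ℂ) 1) :
    den α β z ≠ 0 := by
  intro h0
  have key := normSq_num_sub_normSq_den α β z
  rw [h0, mem_unit_sphere_iff_normSq.1 hz, map_zero, sub_self, mul_zero, sub_zero] at key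
  have hβ : β = -(α * z) := by linear_combination normSq_eq_zero.1 key
  apply hD
  rw [hβ, normSq_neg, normSq_mul, mem_unit_sphere_iff_normSq.1 hz, mul_one]

theorem mapsTo_sphere (hD : normSq α ≠ normSq β) :
    Set.MapsTo (map α β) (sphere (0 : ℂ) 1) (sphere (0 : ℂ) 1) := by
  intro z hz
  have key := normSq_num_sub_normSq_den α β z
  rw [mem_unit_sphere_iff_normSq.1 hz, sub_self, mul_zero, sub_eq_zero] at key
  rw [mem_unit_sphere_iff_normSq, map, normSq_div, key,
    div_self (normSq_eq_zero.not.2 (den_ne_zero hD hz))]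

theorem den_eq_add_mul_sub_fixedPt (hβ : β ≠ 0) (s : ℝ) (z : ℂ) :
    den α β z = (α.re + s : ℝ) + conj β * (z - fixedPt α β s) := by
  have hβ' : conj β ≠ 0 := (map_ne_zero _).2 hβ
  rw [den, fixedPt, mul_sub, mul_div_cancel₀ _ hβ']
  conv_lhs => rw [← re_add_im α, map_add, conj_ofReal, map_mul, conj_ofReal, conj_I]
  push_cast
  ring

theorem map_sub_fixedPt (hβ : β ≠ 0) {s : ℝ} (hs : s ^ 2 = normSq β - α.im ^ 2) {z : ℂ}
    (hz : den α β z ≠ 0) :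
    map α β z - fixedPt α β s = (α.re - s : ℝ) * (z - fixedPt α β s) / den α β z := by
  set p := fixedPt α β s
  have hβ' : conj β ≠ 0 := (map_ne_zero _).2 hβ
  have hp : conj β * p = s + α.im * I := mul_div_cancel₀ _ hβ'
  have hβp : β = (s - α.im * I) * p := by
    refine mul_left_cancel₀ hβ' ?_
    rw [mul_left_comm, hp, mul_comm, mul_conj]
    have hsC : (s : ℂ) ^ 2 = normSq β - α.im ^ 2 := by exact_mod_cast hs
    linear_combination (α.im : ℂ) ^ 2 * I_sq - hsC
  rw [map, div_sub' hz, den_eq_add_mul_sub_fixedPt hβ s]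
  congr 1
  push_cast
  linear_combination (-(z : ℂ) + p) * hp + hβp - z * re_add_im α

theorem normSq_sub_normSq_eq {s : ℝ} (hs : s ^ 2 = normSq β - α.im ^ 2) :
    normSq α - normSq β = (α.re - s) * (α.re + s) := by
  rw [normSq_apply]
  linear_combination hs

theorem re_ne_zero (hD : 0 < normSq α - normSq β) {s : ℝ} (hs : s ^ 2 = normSq β - α.im ^ 2) :
    α.re ≠ 0 := by
  intro h
  rw [normSq_sub_normSq_eq hs, h] at hD
  nlinarith

theorem fixedPt_mem_sphere (hβ : β ≠ 0) {s : ℝ} (hs : s ^ 2 = normSq β - α.im ^ 2) :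
    fixedPt α β s ∈ sphere (0 : ℂ) 1 := by
  rw [mem_unit_sphere_iff_normSq, fixedPt, normSq_div, normSq_conj,
    div_eq_one_iff_eq (normSq_eq_zero.not.2 hβ), normSq_add_mul_I]
  linear_combination hs

theorem mapsTo_sphere_diff_fixedPt (hβ : β ≠ 0) (hD : normSq α ≠ normSq β) {s : ℝ}
    (hs : s ^ 2 = normSq β - α.im ^ 2) (hμ : α.re - s ≠ 0) :
    Set.MapsTo (map α β) (sphere (0 : ℂ) 1 \ {fixedPt α β s})
      (sphere (0 : ℂ) 1 \ {fixedPt α β s}) := by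
  rintro z ⟨hz, hzp⟩
  refine ⟨mapsTo_sphere hD hz, fun hfix ↦ hzp ?_⟩
  have hden := den_ne_zero hD hz
  have key := map_sub_fixedPt hβ hs hden
  rw [Set.mem_singleton_iff.1 hfix, sub_self, eq_comm, div_eq_zero_iff, mul_eq_zero] at key
  rcases key with (hμ' | hzp') | hden'
  · exact absurd (ofReal_eq_zero.1 hμ') hμ
  · exact sub_eq_zero.1 hzp'
  · exact absurd hden' hden

theorem weight_mul_normSq_sub_fixedPt (hβ : β ≠ 0) (hD : 0 < normSq α - normSq β) {s : ℝ}
    (hs : s ^ 2 = normSq β - α.im ^ 2) {z : ℂ} (hz : z ∈ sphere (0 : ℂ) 1) :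
    weight α β z * normSq (z - fixedPt α β s) =
      (α.re + s) / (α.re - s) * normSq (map α β z - fixedPt α β s) := by
  have hden := den_ne_zero (sub_pos.1 hD).ne' hz
  rw [weight, abs_of_pos hD, map_sub_fixedPt hβ hs hden, normSq_div, normSq_mul, normSq_ofReal,
    normSq_sub_normSq_eq hs]
  have hden' : normSq (den α β z) ≠ 0 := normSq_eq_zero.not.2 hden
  have hμ : α.re - s ≠ 0 := by
    intro h; rw [normSq_sub_normSq_eq hs, h, zero_mul] at hD; exact lt_irrefl 0 hD
  field_simp

theorem ratio_map_sub_fixedPt (hβ : β ≠ 0) {s : ℝ} (hs : s ^ 2 = normSq β - α.im ^ 2)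
    {z : ℂ}     (hz : den α β z ≠ 0) :
    (map α β z - fixedPt α β s) / (map α β z - fixedPt α β (-s)) =
      ((α.re - s) / (α.re + s) : ℝ) * ((z - fixedPt α β s) / (z - fixedPt α β (-s))) := by
  rw [map_sub_fixedPt hβ hs hz, map_sub_fixedPt hβ (by rwa [neg_sq]) hz,
    div_div_div_cancel_right₀ hz, mul_div_mul_comm]
  push_cast
  ring

theorem inv_map_sub_fixedPt (hβ : β ≠ 0) {s : ℝ} (hs : s ^ 2 = normSq β - α.im ^ 2)
    (hμ : α.re - s ≠ 0) {z : ℂ} (hz : den α β z ≠ 0) (hzp : z ≠ fixedPt α β s) :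
    (map α β z - fixedPt α β s)⁻¹ =
      (α.re + s) / (α.re - s) * (z - fixedPt α β s)⁻¹ + conj β / (α.re - s) := by
  rw [map_sub_fixedPt hβ hs hz, inv_div, den_eq_add_mul_sub_fixedPt hβ s]
  have : z - fixedPt α β s ≠ 0 := sub_ne_zero.2 hzp
  have : (α.re : ℂ) - s ≠ 0 := by exact_mod_cast hμ
  push_cast
  field_simp

theorem re_sub_div_re_add_mem_Ioo (hD : 0 < normSq α - normSq β) {s : ℝ}
    (hs : s ^ 2 = normSq β - α.im ^ 2) (hsα : 0 < s * α.re) :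
    (α.re - s) / (α.re + s) ∈ Set.Ioo 0 1 := by
  rw [normSq_sub_normSq_eq hs] at hD
  have hpos : 0 < (α.re + s) ^ 2 := sq_pos_iff.2 fun h ↦ by simp [h] at hD
  have hκ : (α.re - s) / (α.re + s) = (α.re - s) * (α.re + s) / (α.re + s) ^ 2 := by
    field_simp
  rw [hκ]
  exact ⟨div_pos hD hpos, (div_lt_one hpos).2 (by nlinarith)⟩

theorem tendsto_iterate_of_hyperbolic (hβ : β ≠ 0) (hD : 0 < normSq α - normSq β) {s : ℝ}
    (hs : s ^ 2 = normSq β - α.im ^ 2) (hsα : 0 < s * α.re) {z : ℂ}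
    (hz : z ∈ sphere (0 : ℂ) 1 \ {fixedPt α β (-s)}) :
    Tendsto (fun n ↦ (map α β)^[n] z) atTop (𝓝 (fixedPt α β s)) := by
  set p := fixedPt α β s
  set q := fixedPt α β (-s)
  set κ := (α.re - s) / (α.re + s)
  obtain ⟨hκ0, hκ1⟩ := re_sub_div_re_add_mem_Ioo hD hs hsα
  have hD' : normSq α ≠ normSq β := (sub_pos.1 hD).ne'
  have hmaps : Set.MapsTo (map α β) (sphere (0 : ℂ) 1 \ {q}) (sphere (0 : ℂ) 1 \ {q}) :=
    mapsTo_sphere_diff_fixedPt hβ hD' (by rwa [neg_sq]) (by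
      rw [sub_neg_eq_add]; intro h; rw [h] at hκ0; simp at hκ0)
  have hratio (n : ℕ) :
      (κ : ℂ) ^ n * ((z - p) / (z - q)) = ((map α β)^[n] z - p) / ((map α β)^[n] z - q) := by
    simpa using hmaps.prod_range_iterate_mul_eq (c := fun _ ↦ (κ : ℂ)) (d := 1)
      (a := fun ζ ↦ (ζ - p) / (ζ - q))
      (fun ζ hζ ↦ by
        simp only [Pi.one_apply, one_mul]
        exact (ratio_map_sub_fixedPt hβ hs (den_ne_zero hD' hζ.1)).symm) hz n
  have hbound (n : ℕ) : ‖(map α β)^[n] z - p‖ ≤ 2 * ‖(z - p) / (z - q)‖ * κ ^ n := by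
    obtain ⟨hgn, hgq⟩ := hmaps.iterate n hz
    have hq := fixedPt_mem_sphere hβ (s := -s) (by rwa [neg_sq])
    rw [← div_mul_cancel₀ (_ - p) (sub_ne_zero.2 hgq), ← hratio, norm_mul, norm_mul, norm_pow,
      Complex.norm_real, Real.norm_of_nonneg hκ0.le]
    have hgq2 : ‖(map α β)^[n] z - q‖ ≤ 2 := by
      have := norm_sub_le ((map α β)^[n] z) q
      rw [mem_sphere_zero_iff_norm.1 hgn, mem_sphere_zero_iff_norm.1 hq] at this
      linarith
    have := mul_nonneg (pow_nonneg hκ0.le n) (norm_nonneg ((z - p) / (z - q)))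
    nlinarith
  rw [tendsto_iff_norm_sub_tendsto_zero]
  refine squeeze_zero (fun _ ↦ norm_nonneg _) hbound ?_
  simpa using (tendsto_pow_atTop_nhds_zero_of_lt_one hκ0.le hκ1).const_mul
    (2 * ‖(z - p) / (z - q)‖)

theorem tendsto_iterate_of_parabolic (hβ : β ≠ 0) (hD : 0 < normSq α - normSq β)
    (hβim : normSq β = α.im ^ 2) {z : ℂ} (hz : z ∈ sphere (0 : ℂ) 1 \ {fixedPt α β 0}) :
    Tendsto (fun n ↦ (map α β)^[n] z) atTop (𝓝 (fixedPt α β 0)) := by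
  set p := fixedPt α β 0
  have hs : (0 : ℝ) ^ 2 = normSq β - α.im ^ 2 := by rw [hβim]; ring
  have hre := re_ne_zero hD hs
  have hD' : normSq α ≠ normSq β := (sub_pos.1 hD).ne'
  have hmaps := mapsTo_sphere_diff_fixedPt hβ hD' hs (by simpa using hre)
  have hc : conj β / α.re ≠ 0 := div_ne_zero ((map_ne_zero _).2 hβ) (ofReal_ne_zero.2 hre)
  have hinv (n : ℕ) : ((map α β)^[n] z - p)⁻¹ = n * (conj β / α.re) + (z - p)⁻¹ := by
    simpa using (hmaps.sum_range_iterate_add_eq (c := fun _ ↦ conj β / α.re) (d := 0)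
      (a := fun ζ ↦ (ζ - p)⁻¹) (fun ζ hζ ↦ by
        rw [add_comm]
        simpa [hre] using (inv_map_sub_fixedPt hβ hs (by simpa using hre)
          (den_ne_zero hD' hζ.1) hζ.2).symm) hz n).symm
  have hcob :
      Tendsto (fun n : ℕ ↦ ((map α β)^[n] z - p)⁻¹) atTop (Bornology.cobounded ℂ) := by
    simp_rw [hinv]
    exact (tendsto_add_const_cobounded _).comp
      ((tendsto_mul_right_cobounded hc).comp tendsto_natCast_atTop_cobounded)
  simpa using (tendsto_inv₀_cobounded.comp hcob).add_const p

theorem tendsto_prod_weight (hβ : β ≠ 0) (hD : 0 < normSq α - normSq β) {s : ℝ}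
    (hs : s ^ 2 = normSq β - α.im ^ 2) (hsα : 0 ≤ s * α.re) {z : ℂ}
    (hz : z ∈ sphere (0 : ℂ) 1 \ {fixedPt α β (-s)})
    (horbit : Tendsto (fun n ↦ (map α β)^[n] z) atTop (𝓝 (fixedPt α β s))) :
    Tendsto (fun n ↦ ∏ j ∈ range n, weight α β ((map α β)^[j] z)) atTop (𝓝 0) := by
  set q := fixedPt α β (-s)
  set κ := (α.re - s) / (α.re + s)
  have hprod (n : ℕ) : ∏ j ∈ range n, weight α β ((map α β)^[j] z) =
      κ ^ n * normSq ((map α β)^[n] z - q) / normSq (z - q) := by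
    refine eq_div_of_mul_eq (normSq_eq_zero.not.2 (sub_ne_zero.2 hz.2)) ?_
    simpa using (mapsTo_sphere (sub_pos.1 hD).ne').prod_range_iterate_mul_eq
      (a := fun ζ ↦ normSq (ζ - q)) (d := fun _ ↦ κ) (fun ζ hζ ↦ by
        have := weight_mul_normSq_sub_fixedPt hβ hD (s := -s) (by rwa [neg_sq]) hζ
        rwa [sub_neg_eq_add, ← sub_eq_add_neg] at this) hz.1 n
  have hlim : Tendsto (fun n ↦ κ ^ n * normSq ((map α β)^[n] z - q)) atTop (𝓝 0) := by
    have hdist : Tendsto (fun n ↦ normSq ((map α β)^[n] z - q)) atTop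
        (𝓝 (normSq (fixedPt α β s - q))) :=
      (continuous_normSq.tendsto _).comp (horbit.sub_const q)
    rcases eq_or_ne s 0 with rfl | hs0
    · simpa [κ, q, re_ne_zero hD hs] using hdist
    · have hκ := re_sub_div_re_add_mem_Ioo hD hs
        (hsα.lt_of_ne' (mul_ne_zero hs0 (re_ne_zero hD hs)))
      simpa using (tendsto_pow_atTop_nhds_zero_of_lt_one hκ.1.le hκ.2).mul hdist
  simpa [hprod] using hlim.div_const (normSq (z - q))

theorem exists_attracting_fixedPt (hβ : β ≠ 0) (hD : 0 < normSq α - normSq β)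
    (hre : normSq α - normSq β ≤ α.re ^ 2) :
    ∃ p ∈ sphere (0 : ℂ) 1, ∃ q, ∀ z ∈ sphere (0 : ℂ) 1 \ {q},
      Tendsto (fun n ↦ (map α β)^[n] z) atTop (𝓝 p) ∧
      Tendsto (fun n ↦ ∏ j ∈ range n, weight α β ((map α β)^[j] z)) atTop (𝓝 0) := by
  obtain ⟨s, hs, hsα⟩ := exists_sq_eq_and_mul_nonneg (a := normSq β - α.im ^ 2) α.re
    (by rw [normSq_apply] at hre; linarith)
  refine ⟨fixedPt α β s, fixedPt_mem_sphere hβ hs, fixedPt α β (-s), fun z hz ↦ ?_⟩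
  have horbit : Tendsto (fun n ↦ (map α β)^[n] z) atTop (𝓝 (fixedPt α β s)) := by
    rcases eq_or_ne s 0 with rfl | hs0
    · exact tendsto_iterate_of_parabolic hβ hD (by linear_combination -hs) (by simpa using hz)
    · exact tendsto_iterate_of_hyperbolic hβ hD hs
        (hsα.lt_of_ne' (mul_ne_zero hs0 (re_ne_zero hD hs))) hz
  exact ⟨horbit, tendsto_prod_weight hβ hD hs hsα hz horbit⟩

def IsAutomorphic (m : ℕ) (α β : ℂ) (f : ℂ → ℝ) : Prop :=
  ∀ z ∈ sphere (0 : ℂ) 1, f z = weight α β z ^ m * f (map α β z)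

theorem IsAutomorphic.exists_eq_zero_pow_mul {m : ℕ} {f : ℂ → ℝ}
    (haut : IsAutomorphic m α β f) (hf : ContinuousOn f (sphere (0 : ℂ) 1)) (hβ : β ≠ 0)
    (hD : 0 < normSq α - normSq β) (hre : normSq α - normSq β ≤ α.re ^ 2) :
    ∃ c, ∀ z ∈ sphere (0 : ℂ) 1, f z = 0 ^ m * c := by
  obtain ⟨p, hp, q, hconv⟩ := exists_attracting_fixedPt hβ hD hre
  exact ⟨f p, eq_zero_pow_mul_of_tendsto_iterate preperfect_unit_sphere
    (mapsTo_sphere (sub_pos.1 hD).ne') hf haut hp hconv⟩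

theorem map_mul_den {z : ℂ} (hz : den α β z ≠ 0) : map α β z * den α β z = α * z + β :=
  div_mul_cancel₀ _ hz

theorem den_comp_self {z : ℂ} (hz : den α β z ≠ 0) :
    den (α * α + β * conj β) (β * (α + conj α)) z =
      den α β (map α β z) * den α β z := by
  calc den (α * α + β * conj β) (β * (α + conj α)) z
      = conj β * (α * z + β) + conj α * den α β z := by
        simp only [den, map_add, map_mul, conj_conj]
        ring
    _ = (conj β * map α β z + conj α) * den α β z := by
        rw [add_mul, mul_assoc, map_mul_den hz]

theorem map_map {z : ℂ} (hz : den α β z ≠ 0) :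
    map α β (map α β z) = map (α * α + β * conj β) (β * (α + conj α)) z := by
  have hnum : (α * map α β z + β) * den α β z =
      (α * α + β * conj β) * z + β * (α + conj α) := by
    rw [add_mul, mul_assoc, map_mul_den hz, den]
    ring
  calc map α β (map α β z)
      = (α * map α β z + β) * den α β z / (den α β (map α β z) * den α β z) :=
        (mul_div_mul_right _ _ hz).symm
    _ = _ := by rw [hnum, ← den_comp_self hz]; rfl

theorem normSq_sub_normSq_comp_self :
    normSq (α * α + β * conj β) - normSq (β * (α + conj α)) =
      (normSq α - normSq β) ^ 2 := by
  simp only [normSq_apply, add_re, add_im, mul_re, mul_im, conj_re, conj_im]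
  ring

theorem weight_comp_self {z : ℂ} (hz : den α β z ≠ 0) :
    weight (α * α + β * conj β) (β * (α + conj α)) z =
      weight α β z * weight α β (map α β z) := by
  rw [weight, weight, weight, den_comp_self hz, normSq_sub_normSq_comp_self, normSq_mul, abs_pow]
  ring

theorem IsAutomorphic.comp_self {m : ℕ} {f : ℂ → ℝ} (haut : IsAutomorphic m α β f)
    (hD : normSq α ≠ normSq β) :
    IsAutomorphic m (α * α + β * conj β) (β * (α + conj α)) f := by
  intro z hz
  have hz' := den_ne_zero hD hz
  rw [haut z hz, haut _ (mapsTo_sphere hD hz), weight_comp_self hz', map_map hz', mul_pow,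
    mul_assoc]

theorem IsAutomorphic.exists_eq_zero_pow_mul_of_neg {m : ℕ} {f : ℂ → ℝ}
    (haut : IsAutomorphic m α β f) (hf : ContinuousOn f (sphere (0 : ℂ) 1)) (hβ : β ≠ 0)
    (hD : normSq α - normSq β < 0) (hre : α.re ≠ 0) :
    ∃ c, ∀ z ∈ sphere (0 : ℂ) 1, f z = 0 ^ m * c := by
  have hre' : (α * α + β * conj β).re = α.re ^ 2 - α.im ^ 2 + normSq β := by
    rw [add_re, mul_conj, ofReal_re, mul_re]
    ring
  refine (haut.comp_self (sub_neg.1 hD).ne).exists_eq_zero_pow_mul hf ?_ ?_ ?_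
  · refine mul_ne_zero hβ ?_
    rw [add_conj]
    exact_mod_cast mul_ne_zero two_ne_zero hre
  · rw [normSq_sub_normSq_comp_self]
    exact sq_pos_of_neg hD
  · have hα : normSq α = α.re ^ 2 + α.im ^ 2 := by rw [normSq_apply]; ring
    rw [normSq_sub_normSq_comp_self, hre', hα]
    rw [hα] at hD
    nlinarith [mul_nonneg (sq_nonneg α.re) (by nlinarith : 0 ≤ normSq β - α.im ^ 2)]

end CircleMobius

open Complex ComplexConjugate

theorem mob_eq_map (za zb z : ℂ) :
    mob za zb z = CircleMobius.map (conj za * zb - 1) (za - zb) z := by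
  simp only [mob, CircleMobius.map, CircleMobius.den, map_sub, map_mul, conj_conj, map_one]

theorem one_sub_sq_mul_one_sub_sq (za zb : ℂ) :
    (1 - ‖za‖ ^ 2) * (1 - ‖zb‖ ^ 2) = normSq (conj za * zb - 1) - normSq (za - zb) := by
  simp only [Complex.sq_norm, normSq_apply, sub_re, sub_im, mul_re, mul_im, conj_re, conj_im,
    one_re, one_im]
  ring

theorem mobDeriv_eq_weight (za zb z : ℂ) :
    mobDeriv za zb z = CircleMobius.weight (conj za * zb - 1) (za - zb) z := by
  rw [mobDeriv, CircleMobius.weight, one_sub_sq_mul_one_sub_sq, Complex.sq_norm]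
  simp only [CircleMobius.den, map_sub, map_mul, conj_conj, map_one]

theorem tAutomorphic_iff_isAutomorphic (k : ℕ) (za zb : ℂ) (f : ℂ → ℝ) :
    TAutomorphic k za zb f ↔
      CircleMobius.IsAutomorphic (k - 1) (conj za * zb - 1) (za - zb) f := by
  simp only [TAutomorphic, CircleMobius.IsAutomorphic, mob_eq_map, mobDeriv_eq_weight]

theorem automorphic_nonelliptic_general
    (k : ℕ) (za zb : ℂ)
    (hab : za ≠ zb)
    (htype :
      (0 < (1 - ‖za‖ ^ 2) * (1 - ‖zb‖ ^ 2) ∧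
        (1 - ‖za‖ ^ 2) * (1 - ‖zb‖ ^ 2)
          ≤ ((starRingEnd ℂ za * zb).re - 1) ^ 2) ∨
      ((1 - ‖za‖ ^ 2) * (1 - ‖zb‖ ^ 2) < 0 ∧
        (starRingEnd ℂ za * zb).re ≠ 1))
    (f : ℂ → ℝ) (hf : ContinuousOn f (sphere (0 : ℂ) 1))
    (haut : TAutomorphic k za zb f) :
    (k = 1 → ∃ c : ℝ, ∀ z ∈ sphere (0 : ℂ) 1, f z = c) ∧
    (1 < k → ∀ z ∈ sphere (0 : ℂ) 1, f z = 0) := by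
  have hβ : za - zb ≠ 0 := sub_ne_zero.2 hab
  have hre : (conj za * zb - 1).re = (conj za * zb).re - 1 := by simp
  rw [tAutomorphic_iff_isAutomorphic] at haut
  rw [one_sub_sq_mul_one_sub_sq, ← hre] at htype
  obtain ⟨c, hc⟩ : ∃ c, ∀ z ∈ sphere (0 : ℂ) 1, f z = 0 ^ (k - 1) * c := by
    rcases htype with ⟨hD, hD_le⟩ | ⟨hD, hre_ne⟩
    · exact haut.exists_eq_zero_pow_mul hf hβ hD hD_le
    · exact haut.exists_eq_zero_pow_mul_of_neg hf hβ hD (by rw [hre]; exact sub_ne_zero.2 hre_ne)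
  refine ⟨fun hk ↦ ⟨c, by simpa [hk] using hc⟩, fun hk z hz ↦ ?_⟩
  rw [hc z hz, zero_pow (by omega), zero_mul]

theorem automorphic_nonelliptic
    (k : ℕ) (hk : 1 ≤ k) (za zb : ℂ)
    (hza : ‖za‖ ≠ 1) (hzb : ‖zb‖ ≠ 1) (hab : za ≠ zb)
    (htype :
      (0 < (1 - ‖za‖ ^ 2) * (1 - ‖zb‖ ^ 2) ∧
        (1 - ‖za‖ ^ 2) * (1 - ‖zb‖ ^ 2)
          ≤ ((starRingEnd ℂ za * zb).re - 1) ^ 2) ∨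
      ((1 - ‖za‖ ^ 2) * (1 - ‖zb‖ ^ 2) < 0 ∧
        (starRingEnd ℂ za * zb).re ≠ 1))
    (f : ℂ → ℝ) (hf : ContinuousOn f (sphere (0 : ℂ) 1))
    (haut : TAutomorphic k za zb f) :
    (k = 1 → ∃ c : ℝ, ∀ z ∈ sphere (0 : ℂ) 1, f z = c) ∧
    (1 < k → ∀ z ∈ sphere (0 : ℂ) 1, f z = 0) :=
  automorphic_nonelliptic_general k za zb hab htype f hf haut
end
end
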